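/- Assume p ≠ 2. There do not exist elements a, b ∈ M fixed by every element of G34 such that u12 = (σ1 − 1)·a + (σ2 − 1)·b in M, where u12 is viewed in M via the inclusions A_2(G12) ⊆ Q ⊆ M_ω ⊆ M. -/

import Mathlib

open MonoidAlgebra

set_option maxHeartbeats 1000000
set_option synthInstance.maxHeartbeats 400000

noncomputable section

/-! ## Generic (unbundled) group-cohomology notions in low degree -/

/-- `f : G → A` is a 1-cocycle for the (unbundled) action `act`. -/
def IsOneCocycle {G : Type*} [Group G] {A : Type*} [AddCommGroup A]
    (act : G → A → A) (f : G → A) : Prop :=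
  ∀ g h : G, f (g * h) = act g (f h) + f g

/-- `f : G → A` is a 1-coboundary for the (unbundled) action `act`. -/
def IsOneCoboundary {G : Type*} [Group G] {A : Type*} [AddCommGroup A]
    (act : G → A → A) (f : G → A) : Prop :=
  ∃ a : A, ∀ g : G, f g = act g a - a

/-- `f : G → G → A` is a 2-coboundary for the (unbundled) action `act`. -/
def IsTwoCoboundary {G : Type*} [Group G] {A : Type*} [AddCommGroup A]
    (act : G → A → A) (f : G → G → A) : Prop :=
  ∃ c : G → A, ∀ g h : G, f g h = act g (c h) - c (g * h) + c g

/-- restriction of an (unbundled) action to a subgroup. -/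
def resAct {G : Type*} [Group G] {A : Type*} (H : Subgroup G) (act : G → A → A) :
    H → A → A := fun h => act (h : G)

/-! ## Augmentation ideal for a general group -/

/-- the augmentation map `Z[G] → Z`. -/
def augGen (G : Type*) [Group G] : MonoidAlgebra ℤ G →+* ℤ :=
  (MonoidAlgebra.lift ℤ ℤ G 1).toRingHom

/-- the augmentation ideal `I[G] ⊆ Z[G]`. -/
def IGen (G : Type*) [Group G] : Ideal (MonoidAlgebra ℤ G) := RingHom.ker (augGen G)

/-- the action of `G` on `I[G]` by left multiplication. -/
def actIGen (G : Type*) [Group G] (g : G) (y : ↥(IGen G)) : ↥(IGen G) :=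
  ⟨of ℤ G g * y.val, by
    have h0 : augGen G y.val = 0 := y.2
    simp [IGen, RingHom.mem_ker, map_mul, h0]⟩

/-- the distinguished 1-cocycle `d_H : H → I[G]`, `h ↦ h - 1`. -/
def dGen {G : Type*} [Group G] (H : Subgroup G) (h : H) : ↥(IGen G) :=
  ⟨of ℤ G (h : G) - 1, by simp [IGen, RingHom.mem_ker, map_sub, augGen]⟩

/-! ## The groups of the paper -/

/-- the elementary abelian group `G₁₂` of order `p²`. -/
abbrev G12t (p : ℕ) := Multiplicative (ZMod p × ZMod p)
/-- a cyclic group of order `p`. -/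
abbrev Cpt (p : ℕ) := Multiplicative (ZMod p)
/-- the elementary abelian group `G = ⟨σ₁⟩ × ⟨σ₂⟩ × ⟨σ₃⟩ × ⟨σ₄⟩` of order `p⁴`. -/
abbrev Gp (p : ℕ) := Multiplicative (ZMod p × ZMod p × ZMod p × ZMod p)

def t1 (p : ℕ) : G12t p := Multiplicative.ofAdd (1, 0)
def t2 (p : ℕ) : G12t p := Multiplicative.ofAdd (0, 1)
def c1g (p : ℕ) : Cpt p := Multiplicative.ofAdd 1
def s1 (p : ℕ) : Gp p := Multiplicative.ofAdd (1, 0, 0, 0)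
def s2 (p : ℕ) : Gp p := Multiplicative.ofAdd (0, 1, 0, 0)
def s3 (p : ℕ) : Gp p := Multiplicative.ofAdd (0, 0, 1, 0)
def s4 (p : ℕ) : Gp p := Multiplicative.ofAdd (0, 0, 0, 1)

/-- the group ring `Z[G₁₂]`. -/
abbrev R12 (p : ℕ) := MonoidAlgebra ℤ (G12t p)
/-- the group ring `Z[⟨σ⟩]` of a cyclic group of order `p`. -/
abbrev RCp (p : ℕ) := MonoidAlgebra ℤ (Cpt p)
/-- the group ring `Z[G]`. -/
abbrev RG (p : ℕ) := MonoidAlgebra ℤ (Gp p)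

/-- the quotient map `G → G₁₂ = G/G₃₄`. -/
def π12 (p : ℕ) : Gp p →* G12t p :=
  AddMonoidHom.toMultiplicative
    { toFun := fun v => (v.1, v.2.1), map_zero' := rfl, map_add' := fun _ _ => rfl }

/-- the quotient map `G → ⟨σ₃⟩ = G/⟨σ₁,σ₂,σ₄⟩`. -/
def π3 (p : ℕ) : Gp p →* Cpt p :=
  AddMonoidHom.toMultiplicative
    { toFun := fun v => v.2.2.1, map_zero' := rfl, map_add' := fun _ _ => rfl }

/-- the quotient map `G → ⟨σ₄⟩ = G/⟨σ₁,σ₂,σ₃⟩`. -/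
def π4 (p : ℕ) : Gp p →* Cpt p :=
  AddMonoidHom.toMultiplicative
    { toFun := fun v => v.2.2.2, map_zero' := rfl, map_add' := fun _ _ => rfl }

/-- the inclusion `G₁₂ → G`. -/
def emb12 (p : ℕ) : G12t p →* Gp p :=
  AddMonoidHom.toMultiplicative
    { toFun := fun v => (v.1, v.2, 0, 0), map_zero' := rfl,
      map_add' := fun _ _ => by ext <;> simp }

/-- the subgroup `G₁₂ = ⟨σ₁, σ₂⟩ ≤ G`. -/
def G12sub (p : ℕ) : Subgroup (Gp p) := Subgroup.closure {s1 p, s2 p}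
/-- the subgroup `G₃₄ = ⟨σ₃, σ₄⟩ ≤ G`. -/
def G34sub (p : ℕ) : Subgroup (Gp p) := Subgroup.closure {s3 p, s4 p}

/-! ## The lattice `A₂(G₁₂)` and its distinguished elements -/

/-- the map `Z[G₁₂]·d₁ ⊕ Z[G₁₂]·d₂ → I[G₁₂] ⊆ Z[G₁₂]`, `dᵢ ↦ σᵢ - 1`. -/
def d12map (p : ℕ) : (R12 p × R12 p) →ₗ[R12 p] R12 p :=
  (LinearMap.toSpanSingleton (R12 p) (R12 p) (of ℤ (G12t p) (t1 p) - 1)).comp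
      (LinearMap.fst (R12 p) (R12 p) (R12 p)) +
  (LinearMap.toSpanSingleton (R12 p) (R12 p) (of ℤ (G12t p) (t2 p) - 1)).comp
      (LinearMap.snd (R12 p) (R12 p) (R12 p))

/-- the lattice `A₂(G₁₂)`, the kernel of `Z[G₁₂]·d₁ ⊕ Z[G₁₂]·d₂ → I[G₁₂]`. -/
def A2G12 (p : ℕ) : Submodule (R12 p) (R12 p × R12 p) := LinearMap.ker (d12map p)

/-- `u₁₂ = (σ₂-1)d₁ - (σ₁-1)d₂` as an element of `Z[G₁₂]·d₁ ⊕ Z[G₁₂]·d₂`. -/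
def u12raw (p : ℕ) : R12 p × R12 p :=
  (of ℤ (G12t p) (t2 p) - 1, -(of ℤ (G12t p) (t1 p) - 1))

/-- the norm element `N = 1 + g + ⋯ + g^(p-1)` of a group ring. -/
def NN (p : ℕ) {G : Type*} [CommGroup G] (g : G) : MonoidAlgebra ℤ G :=
  ∑ k ∈ Finset.range p, of ℤ G g ^ k

/-- `b₁ = N₁·d₁`. -/
def b1raw (p : ℕ) : R12 p × R12 p := (NN p (t1 p), 0)
/-- `b₂ = N₂·d₂`. -/
def b2raw (p : ℕ) : R12 p × R12 p := (0, NN p (t2 p))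

lemma ofAdd_pow_p (p : ℕ) {A : Type*} [AddCommGroup A] (a : A) (h : p • a = 0) :
    (Multiplicative.ofAdd a) ^ p = 1 := by
  rw [← ofAdd_nsmul, h]; rfl

lemma zmod_p_smul (p : ℕ) (x : ZMod p) : p • x = 0 := by
  rw [nsmul_eq_mul, ZMod.natCast_self, zero_mul]

lemma t1_pow_p (p : ℕ) : (t1 p) ^ p = 1 := by
  refine ofAdd_pow_p p _ ?_
  rw [Prod.smul_mk, zmod_p_smul, zmod_p_smul]; rfl

lemma t2_pow_p (p : ℕ) : (t2 p) ^ p = 1 := by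
  refine ofAdd_pow_p p _ ?_
  rw [Prod.smul_mk, zmod_p_smul, zmod_p_smul]; rfl

lemma c1g_pow_p (p : ℕ) : (c1g p) ^ p = 1 := by
  refine ofAdd_pow_p p _ (zmod_p_smul p _)

lemma NN_mul (p : ℕ) {G : Type*} [CommGroup G] (g : G) (h : g ^ p = 1) :
    NN p g * (of ℤ G g - 1) = 0 := by
  rw [NN, geom_sum_mul, ← map_pow, h, map_one, sub_self]

lemma u12raw_mem (p : ℕ) : u12raw p ∈ A2G12 p := by
  simp only [A2G12, LinearMap.mem_ker, d12map, LinearMap.add_apply, LinearMap.comp_apply,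
    LinearMap.fst_apply, LinearMap.snd_apply, LinearMap.toSpanSingleton_apply, u12raw,
    smul_eq_mul]
  ring

lemma b1raw_mem (p : ℕ) : b1raw p ∈ A2G12 p := by
  simp only [A2G12, LinearMap.mem_ker, d12map, LinearMap.add_apply, LinearMap.comp_apply,
    LinearMap.fst_apply, LinearMap.snd_apply, LinearMap.toSpanSingleton_apply, b1raw,
    smul_eq_mul, zero_mul, add_zero]
  exact NN_mul p _ (t1_pow_p p)

lemma b2raw_mem (p : ℕ) : b2raw p ∈ A2G12 p := by
  simp only [A2G12, LinearMap.mem_ker, d12map, LinearMap.add_apply, LinearMap.comp_apply,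
    LinearMap.fst_apply, LinearMap.snd_apply, LinearMap.toSpanSingleton_apply, b2raw,
    smul_eq_mul, zero_mul, zero_add]
  exact NN_mul p _ (t2_pow_p p)

/-- `u₁₂` as an element of `A₂(G₁₂)`. -/
def u12e (p : ℕ) : ↥(A2G12 p) := ⟨u12raw p, u12raw_mem p⟩
/-- `b₁` as an element of `A₂(G₁₂)`. -/
def b1e (p : ℕ) : ↥(A2G12 p) := ⟨b1raw p, b1raw_mem p⟩
/-- `b₂` as an element of `A₂(G₁₂)`. -/
def b2e (p : ℕ) : ↥(A2G12 p) := ⟨b2raw p, b2raw_mem p⟩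

/-- the action of `G₁₂` on `A₂(G₁₂)`. -/
def actA2 (p : ℕ) (x : G12t p) (v : ↥(A2G12 p)) : ↥(A2G12 p) :=
  of ℤ (G12t p) x • v

/-! ## The cyclic lattice `A₂(⟨σ⟩)` -/

/-- the map `Z[⟨σ⟩]·d → I[⟨σ⟩]`, `d ↦ σ - 1`. -/
def dcmap (p : ℕ) : RCp p →ₗ[RCp p] RCp p :=
  LinearMap.toSpanSingleton (RCp p) (RCp p) (of ℤ (Cpt p) (c1g p) - 1)

/-- the lattice `A₂(⟨σ⟩)` for a cyclic group of order `p`. -/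
def A2C (p : ℕ) : Submodule (RCp p) (RCp p) := LinearMap.ker (dcmap p)

/-- the norm element `N = 1 + σ + ⋯ + σ^(p-1)` as an element of `A₂(⟨σ⟩)`. -/
def NCe (p : ℕ) : ↥(A2C p) :=
  ⟨NN p (c1g p), by
    simp only [A2C, LinearMap.mem_ker, dcmap, LinearMap.toSpanSingleton_apply, smul_eq_mul]
    exact NN_mul p _ (c1g_pow_p p)⟩

/-- the action of `G` on `A₂(⟨σⱼ⟩)` through a projection `π : G → ⟨σⱼ⟩`. -/
def actCvia (p : ℕ) (π : Gp p →* Cpt p) (g : Gp p) (v : ↥(A2C p)) : ↥(A2C p) :=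
  of ℤ (Cpt p) (π g) • v

/-! ## The explicit canonical 2-cocycles -/

/-- the elements `u_{m,n} ∈ A₂(G₁₂)` (equation (13) of the paper). -/
def umn (p : ℕ) (m1 m2 n1 n2 : ℕ) : ↥(A2G12 p) :=
  (-(of ℤ (G12t p) (t1 p ^ m1) * ∑ j ∈ Finset.range n1, ∑ i ∈ Finset.range m2,
      of ℤ (G12t p) (t1 p ^ i * t2 p ^ j))) • u12e p +
  (of ℤ (G12t p) (t1 p ^ n1) * ∑ j ∈ Finset.range n2, ∑ i ∈ Finset.range m1,
      of ℤ (G12t p) (t1 p ^ i * t2 p ^ j)) • u12e p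

/-- the explicit 2-cocycle `c₁₂` representing the canonical class `[c_{G₁₂}]`. -/
def c12coc (p : ℕ) (x y : G12t p) : ↥(A2G12 p) :=
  let m1 := (Multiplicative.toAdd x).1.val
  let m2 := (Multiplicative.toAdd x).2.val
  let n1 := (Multiplicative.toAdd y).1.val
  let n2 := (Multiplicative.toAdd y).2.val
  of ℤ (G12t p) (t1 p ^ m1) • umn p 0 m2 n1 0 +
    ((m1 + n1) / p) • b1e p +
    ((m2 + n2) / p) • (of ℤ (G12t p) (t1 p ^ ((m1 + n1) % p)) • b2e p)

/-- the explicit 2-cocycle representing the canonical class of a cyclic group of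
order `p` with coefficients in `A₂(⟨σ⟩)`. -/
def ccyc (p : ℕ) (x y : Cpt p) : ↥(A2C p) :=
  if p ≤ (Multiplicative.toAdd x).val + (Multiplicative.toAdd y).val then NCe p else 0

/-! ## The lattice `Q = A₂(G₁₂) ⊕ K₃ ⊕ K₄` -/

/-- `K_j = A₂(⟨σⱼ⟩) ⊕ Z[⟨σⱼ⟩]`. -/
abbrev Kc (p : ℕ) := ↥(A2C p) × RCp p

/-- the carrier of the `G`-lattice `Q = A₂(G₁₂) ⊕ K₃ ⊕ K₄`. -/
abbrev Qc (p : ℕ) := ↥(A2G12 p) × Kc p × Kc p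

/-- the action of `G` on `Q`: `G₁₂` acts naturally on `A₂(G₁₂)` and trivially on
`K₃`, `K₄`; `⟨σⱼ⟩` acts naturally on `K_j` and trivially elsewhere. -/
def actQ (p : ℕ) (g : Gp p) (q : Qc p) : Qc p :=
  (of ℤ (G12t p) (π12 p g) • q.1,
   (of ℤ (Cpt p) (π3 p g) • q.2.1.1, of ℤ (Cpt p) (π3 p g) * q.2.1.2),
   (of ℤ (Cpt p) (π4 p g) • q.2.2.1, of ℤ (Cpt p) (π4 p g) * q.2.2.2))

/-- the 2-cocycle `ω = inf(c₁₂) - inf(c₃) - inf(c₄)` with values in `Q`. -/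
def ωc (p : ℕ) (g g' : Gp p) : Qc p :=
  (c12coc p (π12 p g) (π12 p g'),
   (-(ccyc p (π3 p g) (π3 p g')), 0),
   (-(ccyc p (π4 p g) (π4 p g')), 0))

/-- the order of the restriction of `[ω]` to a subgroup `H ≤ G` in `H²(H, Q)`. -/
def nOrd (p : ℕ) (H : Subgroup (Gp p)) : ℕ :=
  sInf {n : ℕ | 0 < n ∧
    IsTwoCoboundary (resAct H (actQ p)) fun h h' => n • ωc p (h : Gp p) (h' : Gp p)}

/-! ## The augmentation ideal `I[G]` and the lattice `M_ω` -/

/-- the augmentation map `Z[G] → Z`. -/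
def aug (p : ℕ) : RG p →+* ℤ := (MonoidAlgebra.lift ℤ ℤ (Gp p) 1).toRingHom

/-- the augmentation ideal `I[G]`. -/
def IG (p : ℕ) : Ideal (RG p) := RingHom.ker (aug p)

/-- the action of `G` on `I[G]` by left multiplication. -/
def actIG (p : ℕ) (g : Gp p) (y : ↥(IG p)) : ↥(IG p) :=
  ⟨of ℤ (Gp p) g * y.val, by
    have h0 : aug p y.val = 0 := y.2
    simp [IG, RingHom.mem_ker, map_mul, h0]⟩

/-- the 1-cocycle `d_H : H → I[G]`, `h ↦ h - 1`. -/
def dH (p : ℕ) (H : Subgroup (Gp p)) (h : H) : ↥(IG p) :=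
  ⟨of ℤ (Gp p) (h : Gp p) - 1, by simp [IG, RingHom.mem_ker, map_sub, aug]⟩

/-- the carrier of the `G`-lattice `M_ω = Q ⊕ I[G]`. -/
abbrev Mc (p : ℕ) := Qc p × ↥(IG p)

/-- the `Q`-valued correction term of the twisted action on `M_ω`:
`θ(g, Σ a_{g'} g') = Σ a_{g'} ω(g, g')`; on `y ∈ I[G]` (so `Σ a_{g'} = 0` and
`y = Σ a_{g'} (g' - 1)`) this is the `Q`-component of `g·(0, y)`. -/
def θω (p : ℕ) (g : Gp p) (y : RG p) : Qc p :=
  Finsupp.sum y.coeff fun g' a => a • ωc p g g'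

/-- the twisted action of `G` on `M_ω = Q ⊕ I[G]`: `g(x,0) = (gx, 0)` and
`g(0, g'-1) = (ω(g,g'), g(g'-1))`, extended `Z`-linearly. -/
def actM (p : ℕ) (g : Gp p) (m : Mc p) : Mc p :=
  (actQ p g m.1 + θω p g m.2.val, actIG p g m.2)

/-! ## The map `π : A₂(G₁₂) → Z/pZ` -/

/-- the `G₁₂`-module homomorphism `π : A₂(G₁₂) → Z/pZ`, determined by
`π(x·u₁₂ + y·b₁ + z·b₂) = ε(x) mod p`; concretely it sends `v = (v₁, v₂)` to
`Σ_g v₁(g)·(exponent of σ₂ in g)`. -/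
def πmap (p : ℕ) (v : ↥(A2G12 p)) : ZMod p :=
  Finsupp.sum (v : R12 p × R12 p).1.coeff fun g a => (a : ZMod p) * (Multiplicative.toAdd g).2

/-! ## The set `𝓗` of subgroups, the cochains `v_H`, and the lattice `M` -/

/-- the set of subgroups `𝓗 = {G} ∪ {⟨τ, σ₃, σ₄⟩ : τ ∈ G₁₂}`. -/
def HH (p : ℕ) : Set (Subgroup (Gp p)) :=
  insert ⊤ {H | ∃ τ ∈ G12sub p, H = Subgroup.closure {τ, s3 p, s4 p}}

/-- the 1-cochain `v_H : H₁₂ → A₂(G₁₂)`, `v_H(h̄₁) = Σ_{h̄ ∈ H₁₂} c₁₂(h̄₁, h̄)`,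
here inflated to a function of `h̄₁ ∈ G₁₂`. -/
def vH (p : ℕ) (H : Subgroup (Gp p)) (x : G12t p) : ↥(A2G12 p) :=
  ∑ᶠ h' : ↥(H.map (π12 p)), c12coc p x (h' : G12t p)

/-- the 1-cochain `f_H : H → M_ω`, `f_H(h) = (z_H(h) - v_H(h̄), n_H·(h-1))`,
built from a choice of 1-cochain `z_H : H → K₃ ⊕ K₄`. -/
def fHof (p : ℕ) (H : Subgroup (Gp p)) (zH : H → Kc p × Kc p) (h : H) : Mc p :=
  ((-(vH p H (π12 p (h : Gp p))), (zH h).1, (zH h).2),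
   (nOrd p H) • dH p H h)

/-- the carrier of the permutation lattice `P = ⊕_{H ∈ 𝓗} Z[G/H]`. -/
abbrev Pc (p : ℕ) := ∀ H : ↥(HH p), ((Gp p ⧸ (H : Subgroup (Gp p))) →₀ ℤ)

/-- the carrier of the `G`-lattice `M = M_ω ⊕ P`. -/
abbrev MC (p : ℕ) := Mc p × Pc p

/-- the action of `G` on `M = M_ω ⊕ P`, twisted by a family of 1-cocycles
`f_H : H → M_ω` (`H ∈ 𝓗`): `g(x, 0) = (gx, 0)` and
`g(0, u_{gᵢH}) = (gⱼ·f_H(h), u_{gⱼH})` where `g·gᵢ = gⱼ·h`, `h ∈ H`, and the coset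
representatives are chosen by `Quotient.out`. -/
def actMFull (p : ℕ) (fH : ∀ H : ↥(HH p), (↥(H.val) → Mc p))
    (g : Gp p) (m : MC p) : MC p :=
  (actM p g m.1 +
     ∑ᶠ H : ↥(HH p), Finsupp.sum (m.2 H) fun c a =>
       a • actM p (Quotient.out (g • c))
         (fH H ⟨(Quotient.out (g • c))⁻¹ * (g * Quotient.out c), by
            rw [← QuotientGroup.eq, QuotientGroup.out_eq', ← smul_eq_mul,
              MulAction.Quotient.mk_smul_out]⟩),
   fun H => Finsupp.mapDomain (fun c => g • c) (m.2 H))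

/-- the map `π' : M → Z/pZ`, `(x₀, x₁, x₂, y, z) ↦ π(x₀)`. -/
def πmap' (p : ℕ) (m : MC p) : ZMod p := πmap p m.1.1.1

/-- the norm element `N₃₄ = Σ_{g ∈ G₃₄} g ∈ Z[G]`. -/
def N34 (p : ℕ) : RG p := ∑ᶠ g : ↥(G34sub p), of ℤ (Gp p) (g : Gp p)

/-- the augmentation map `Z[G₁₂] → Z`. -/
def aug12 (p : ℕ) : R12 p →+* ℤ := (MonoidAlgebra.lift ℤ ℤ (G12t p) 1).toRingHom


/-!
The paper's map `π : A₂(G₁₂) → ℤ/p` (the `σ₂`-exponent weighted sum of the `d₁`-coordinate) is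
`G₁₂`-invariant, kills `b₁, b₂` and sends `u₁₂` to `1`. On `M_ω` it is `G`-equivariant up to the
twist by `ω`: since `π(c₁₂(x, y)) = -e₂(x) e₁(y)`, one gets `π(g·m) = π(m) - e₂(g) D(m_I)`, where `D`
is the `σ₁`-exponent weighted sum of the `I[G]`-component. The summand `P` contributes nothing:
`π(v_H) = 0` because the `σ₁`-exponents over a subgroup cancel in pairs `h, h⁻¹` (`p` odd), and
`p ∣ n_H` because `[ω]` restricted to `⟨σ₃⟩ ≤ H` has order `p`. Applying `π` to the equation
therefore gives `1 = -D(b_I)`, while `D(b_I) = 0` because `b` is `σ₃`-fixed and `σ₃` shifts the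
`σ₁σ₃`-exponent weighted sum of the `I[G]`-component by `D`.
-/

namespace MonoidAlgebra

variable {G A : Type*} [AddCommGroup A]

def weightSum (w : G → A) : MonoidAlgebra ℤ G →+ A :=
  (Finsupp.linearCombination ℤ w).toAddMonoidHom.comp coeffAddEquiv.toAddMonoidHom

lemma weightSum_apply (w : G → A) (x : MonoidAlgebra ℤ G) :
    weightSum w x = x.coeff.sum fun g a => a • w g :=
  Finsupp.linearCombination_apply ℤ x.coeff

@[simp] lemma weightSum_single (w : G → A) (g : G) (a : ℤ) :
    weightSum w (single g a) = a • w g := by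
  rw [weightSum_apply, coeff_single, Finsupp.sum_single_index (zero_smul ℤ (w g))]

lemma weightSum_of_mul [Monoid G] {w w' : G → A} {g : G} (hw : ∀ h, w (g * h) = w h + w' h)
    (y : MonoidAlgebra ℤ G) :
    weightSum w (of ℤ G g * y) = weightSum w y + weightSum w' y := by
  have : (weightSum w).comp (AddMonoidHom.mulLeft (of ℤ G g)) = weightSum w + weightSum w' :=
    addMonoidHom_ext fun h a => by simp [of_apply, hw, smul_add]
  exact DFunLike.congr_fun this y

lemma weightSum_const [Group G] (c : A) (y : MonoidAlgebra ℤ G) :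
    weightSum (fun _ => c) y = augGen G y • c := by
  have : weightSum (fun _ : G => c) = (zmultiplesHom A c).comp (augGen G).toAddMonoidHom :=
    addMonoidHom_ext fun h a => by simp [augGen]
  exact DFunLike.congr_fun this y

lemma weightSum_of_mul_of_map_mul [Group G] {w : G → A} (hw : ∀ a b, w (a * b) = w a + w b)
    (g : G) (y : MonoidAlgebra ℤ G) :
    weightSum w (of ℤ G g * y) = weightSum w y + augGen G y • w g := by
  rw [weightSum_of_mul (w' := fun _ => w g) fun h => by rw [hw, add_comm], weightSum_const]

end MonoidAlgebra

lemma finsum_eq_zero_of_map_inv_eq_neg {G R : Type*} [Group G] [Ring R]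
    (h2 : IsUnit (2 : R)) {f : G → R} (hf : ∀ g, f g⁻¹ = -f g) : ∑ᶠ g, f g = 0 := by
  have hneg : ∑ᶠ g, f g = -∑ᶠ g, f g :=
    calc ∑ᶠ g, f g = ∑ᶠ g, f g⁻¹ := (finsum_comp_equiv (Equiv.inv G)).symm
      _ = -∑ᶠ g, f g := by simp only [hf, finsum_neg_distrib]
  have : (2 : R) * ∑ᶠ g, f g = 0 := by
    rw [two_mul]
    nth_rewrite 2 [hneg]
    exact add_neg_cancel _
  exact h2.mul_right_eq_zero.mp this

lemma AddMonoidHom.map_finsum_eq_zero {ι M N : Type*} [AddCommMonoid M] [AddCommMonoid N]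
    (φ : M →+ N) {f : ι → M} (h : ∀ i, φ (f i) = 0) : φ (∑ᶠ i, f i) = 0 := by
  by_cases hf : (Function.support f).Finite
  · rw [φ.map_finsum hf, finsum_congr h, finsum_zero]
  · rw [finsum_of_infinite_support hf, map_zero]

section

variable {p : ℕ}

def e₁ (x : G12t p) : ZMod p := (Multiplicative.toAdd x).1
def e₂ (x : G12t p) : ZMod p := (Multiplicative.toAdd x).2
def E₁ (g : Gp p) : ZMod p := (Multiplicative.toAdd g).1
def E₃ (g : Gp p) : ZMod p := (Multiplicative.toAdd g).2.2.1

lemma e₁_mul (x y : G12t p) : e₁ (x * y) = e₁ x + e₁ y := rfl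
lemma e₂_mul (x y : G12t p) : e₂ (x * y) = e₂ x + e₂ y := rfl

variable (p) in
/-- The paper's `π` (`πmap`). -/
def πA : ↥(A2G12 p) →+ ZMod p :=
  (weightSum e₂).comp ((AddMonoidHom.fst _ _).comp (A2G12 p).subtype.toAddMonoidHom)

lemma πA_apply (v : ↥(A2G12 p)) : πA p v = weightSum e₂ (v : R12 p × R12 p).1 := rfl

lemma A2G12_relation (v : ↥(A2G12 p)) :
    (v : R12 p × R12 p).1 * (of ℤ _ (t1 p) - 1) + (v : R12 p × R12 p).2 * (of ℤ _ (t2 p) - 1)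
      = 0 := by
  simpa only [A2G12, LinearMap.mem_ker, d12map, LinearMap.add_apply, LinearMap.comp_apply,
    LinearMap.fst_apply, LinearMap.snd_apply, LinearMap.toSpanSingleton_apply,
    smul_eq_mul] using v.2

lemma augGen_fst_A2G12 (v : ↥(A2G12 p)) : (augGen _ (v : R12 p × R12 p).1 : ZMod p) = 0 := by
  have h := congrArg (weightSum e₁) (A2G12_relation v)
  simp only [mul_sub, mul_one, mul_comm _ (of ℤ _ _), map_add, map_sub, map_zero,
    weightSum_of_mul_of_map_mul (G := G12t p) e₁_mul] at h
  simpa [show e₁ (t1 p) = 1 from rfl, show e₁ (t2 p) = 0 from rfl] using h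

lemma πA_of_smul (x : G12t p) (v : ↥(A2G12 p)) : πA p (of ℤ _ x • v) = πA p v := by
  rw [πA_apply, Submodule.coe_smul, Prod.smul_fst, smul_eq_mul,
    weightSum_of_mul_of_map_mul e₂_mul, zsmul_eq_mul, augGen_fst_A2G12, zero_mul, add_zero,
    πA_apply]

lemma πA_smul_u12e (r : R12 p) : πA p (r • u12e p) = augGen _ r := by
  have hfst : ((r • u12e p : ↥(A2G12 p)) : R12 p × R12 p).1 = of ℤ _ (t2 p) * r - r := by
    show r * (of ℤ (G12t p) (t2 p) - 1) = _
    rw [mul_comm, sub_mul, one_mul]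
  rw [πA_apply, hfst, map_sub, weightSum_of_mul_of_map_mul e₂_mul, add_sub_cancel_left,
    show e₂ (t2 p) = 1 from rfl, zsmul_one]

lemma e₂_t1_pow (k : ℕ) : e₂ (t1 p ^ k) = 0 := by
  simp [e₂, t1, toAdd_pow]

lemma πA_b1e : πA p (b1e p) = 0 := by
  show weightSum e₂ (NN p (t1 p)) = 0
  simp [NN, of_apply, e₂_t1_pow]

lemma πA_smul_b2e (r : R12 p) : πA p (r • b2e p) = 0 := by
  rw [πA_apply, Submodule.coe_smul, Prod.smul_fst]
  show weightSum e₂ (r • (0 : R12 p)) = 0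
  rw [smul_zero, map_zero]

lemma πA_c12coc [NeZero p] (x y : G12t p) : πA p (c12coc p x y) = -(e₂ x * e₁ y) := by
  have humn : ∀ m n : ℕ, umn p 0 m n 0 = (-(∑ j ∈ Finset.range n, ∑ i ∈ Finset.range m,
      of ℤ (G12t p) (t1 p ^ i * t2 p ^ j))) • u12e p := fun m n => by simp [umn, ← one_def]
  simp only [c12coc, map_add, map_nsmul, πA_b1e, πA_smul_b2e, πA_of_smul, humn, πA_smul_u12e]
  simp [augGen, e₁, e₂, mul_comm]

lemma πA_vH [NeZero p] (hodd : Odd p) (H : Subgroup (Gp p)) (x : G12t p) :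
    πA p (vH p H x) = 0 := by
  have h2 : IsUnit (2 : ZMod p) := by
    exact_mod_cast (ZMod.isUnit_iff_coprime 2 p).mpr (Nat.coprime_two_left.mpr hodd)
  rw [vH, (πA p).map_finsum (Set.toFinite _)]
  refine finsum_eq_zero_of_map_inv_eq_neg h2 fun h => ?_
  rw [πA_c12coc, πA_c12coc]
  change -(e₂ x * -e₁ (h : G12t p)) = _
  ring

lemma s3_mem_of_mem_HH {H : Subgroup (Gp p)} (hH : H ∈ HH p) : s3 p ∈ H := by
  rcases hH with rfl | ⟨τ, -, rfl⟩
  · exact Subgroup.mem_top _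
  · exact Subgroup.subset_closure (by simp)

lemma of_c1g_pow_smul_A2C (j : ℕ) (v : ↥(A2C p)) : of ℤ (Cpt p) (c1g p ^ j) • v = v := by
  have hv : of ℤ (Cpt p) (c1g p) • v = v := by
    have h : (v : RCp p) * (of ℤ _ (c1g p) - 1) = 0 := by
      simpa only [A2C, LinearMap.mem_ker, dcmap, LinearMap.toSpanSingleton_apply,
        smul_eq_mul] using v.2
    ext1
    rw [Submodule.coe_smul, smul_eq_mul, mul_comm]
    rwa [mul_sub_one, sub_eq_zero] at h
  induction j with
  | zero => rw [pow_zero, map_one, one_smul]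
  | succ n ih => rw [pow_succ, map_mul, mul_smul, hv, ih]

lemma toAdd_c1g_pow (j : ℕ) : Multiplicative.toAdd (c1g p ^ j) = (j : ZMod p) := by
  simp [c1g, toAdd_pow]

lemma sum_ccyc_c1g_pow [Fact (1 < p)] :
    ∑ j ∈ Finset.range p, ccyc p (c1g p ^ j) (c1g p) = NCe p := by
  have hterm : ∀ j ∈ Finset.range p,
      ccyc p (c1g p ^ j) (c1g p) = if j = p - 1 then NCe p else 0 := by
    intro j hj
    have hjp := Finset.mem_range.mp hj
    have hval : (Multiplicative.toAdd (c1g p ^ j)).val = j := by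
      rw [toAdd_c1g_pow, ZMod.val_natCast, Nat.mod_eq_of_lt hjp]
    have hval1 : (Multiplicative.toAdd (c1g p)).val = 1 := ZMod.val_one p
    rw [ccyc, hval, hval1]
    exact if_congr (by omega) rfl rfl
  rw [Finset.sum_congr rfl hterm, Finset.sum_ite_eq' (Finset.range p) (p - 1) _,
    if_pos (Finset.mem_range.mpr (Nat.sub_lt (NeZero.pos p) one_pos))]

lemma coeff_NCe_one [NeZero p] : (NCe p : RCp p).coeff 1 = 1 := by
  have hne : ∀ k ∈ Finset.range p, k ≠ 0 → c1g p ^ k ≠ 1 := by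
    intro k hk hk0 h
    have h' := congrArg Multiplicative.toAdd h
    rw [toAdd_c1g_pow, toAdd_one, ZMod.natCast_eq_zero_iff] at h'
    exact hk0 (Nat.eq_zero_of_dvd_of_lt h' (Finset.mem_range.mp hk))
  show (NN p (c1g p)).coeff 1 = 1
  rw [NN, coeff_sum, Finsupp.finsetSum_apply,
    Finset.sum_eq_single_of_mem 0 (Finset.mem_range.mpr (NeZero.pos p))]
  · simp [one_def]
  · intro k hk hk0
    rw [← map_pow, of_apply, coeff_single, Finsupp.single_apply, if_neg (hne k hk hk0)]

/-- On the `A₂(⟨σ₃⟩)`-coordinate of `K₃`, a coboundary `n • ω = ∂c` on a subgroup containing `σ₃`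
telescopes along the powers of `σ₃` to `n • N = p • v`. -/
lemma exists_nsmul_NCe_eq_nsmul [Fact (1 < p)] {H : Subgroup (Gp p)} (hs3 : s3 p ∈ H) {n : ℕ}
    (hn : IsTwoCoboundary (resAct H (actQ p)) fun h h' => n • ωc p (h : Gp p) (h' : Gp p)) :
    ∃ v : ↥(A2C p), n • NCe p = p • v := by
  obtain ⟨c, hc⟩ := hn
  let ψ : ℕ → ↥(A2C p) := fun j => (c ⟨s3 p ^ j, H.pow_mem hs3 j⟩).2.1.1
  have hstep : ∀ j, n • -ccyc p (c1g p ^ j) (c1g p) = ψ 1 - ψ (j + 1) + ψ j := by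
    intro j
    have h := congrArg (fun q : Qc p => q.2.1.1)
      (hc ⟨s3 p ^ j, H.pow_mem hs3 j⟩ ⟨s3 p ^ 1, H.pow_mem hs3 1⟩)
    have hmul : (⟨s3 p ^ j, H.pow_mem hs3 j⟩ * ⟨s3 p ^ 1, H.pow_mem hs3 1⟩ : H)
        = ⟨s3 p ^ (j + 1), H.pow_mem hs3 (j + 1)⟩ := Subtype.ext (pow_add _ _ _).symm
    have hπ3 : ∀ i, π3 p (s3 p ^ i) = c1g p ^ i := fun i => map_pow _ _ _
    have hπ3' : π3 p (s3 p) = c1g p := rfl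
    rw [hmul] at h
    simp only [ωc, resAct, actQ, hπ3, hπ3', pow_one, Prod.smul_fst, Prod.smul_snd, Prod.fst_add,
      Prod.snd_add, Prod.fst_sub, Prod.snd_sub, of_c1g_pow_smul_A2C] at h
    simpa only [ψ, pow_one] using h
  have hψp : ψ p = ψ 0 := by
    have : s3 p ^ p = s3 p ^ 0 := by simp [s3, ← ofAdd_nsmul]
    simp only [ψ, this]
  have hsum : n • -NCe p = p • ψ 1 := by
    have hrearr : ∀ j, ψ 1 - ψ (j + 1) + ψ j = ψ 1 + (ψ j - ψ (j + 1)) := fun j => by abel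
    rw [← sum_ccyc_c1g_pow, ← Finset.sum_neg_distrib, Finset.smul_sum,
      Finset.sum_congr rfl fun j _ => hstep j]
    simp only [hrearr, Finset.sum_add_distrib, Finset.sum_const, Finset.card_range,
      Finset.sum_range_sub', hψp, sub_self, add_zero]
  exact ⟨-ψ 1, by rw [smul_neg, ← hsum, smul_neg, neg_neg]⟩

-- `nOrd p H = sInf ∅ = 0` when no multiple of `ω` splits on `H`; then `p ∣ 0` holds trivially.
lemma p_dvd_nOrd [Fact (1 < p)] {H : Subgroup (Gp p)} (hH : H ∈ HH p) : p ∣ nOrd p H := by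
  by_cases hne : {n : ℕ | 0 < n ∧ IsTwoCoboundary (resAct H (actQ p))
      fun h h' => n • ωc p (h : Gp p) (h' : Gp p)}.Nonempty
  · obtain ⟨-, hcob⟩ := Nat.sInf_mem hne
    obtain ⟨v, hv⟩ := exists_nsmul_NCe_eq_nsmul (s3_mem_of_mem_HH hH) hcob
    have h := congrArg (fun x : ↥(A2C p) => (x : RCp p).coeff 1) hv
    rw [Submodule.coe_smul_of_tower, Submodule.coe_smul_of_tower, coeff_smul_apply,
      coeff_smul_apply, coeff_NCe_one, nsmul_eq_mul, nsmul_eq_mul, mul_one] at h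
    exact Int.natCast_dvd_natCast.mp ⟨_, h⟩
  · rw [nOrd, Set.not_nonempty_iff_eq_empty.mp hne, Nat.sInf_empty]
    exact dvd_zero p

variable (p) in
def πM : Mc p →+ ZMod p :=
  (πA p).comp ((AddMonoidHom.fst _ _).comp (AddMonoidHom.fst _ _))

variable (p) in
/-- `σ₃` shifts `ψM` by the `E₁`-weighted sum of the `I[G]`-component, which therefore vanishes
on `σ₃`-fixed elements. -/
def ψM : Mc p →+ ZMod p :=
  (weightSum fun g => E₁ g * E₃ g).comp
    ((IG p).subtype.toAddMonoidHom.comp (AddMonoidHom.snd _ _))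

lemma πA_θω_fst [NeZero p] (g : Gp p) (y : RG p) :
    πA p (θω p g y).1 = -(e₂ (π12 p g) * weightSum E₁ y) := by
  change ((πA p).comp (AddMonoidHom.fst _ _)) (θω p g y) = _
  rw [θω, map_finsuppSum, weightSum_apply, Finsupp.mul_sum, Finsupp.sum, Finsupp.sum,
    ← Finset.sum_neg_distrib]
  refine Finset.sum_congr rfl fun g' _ => ?_
  simp only [map_zsmul, AddMonoidHom.comp_apply, AddMonoidHom.coe_fst, ωc, πA_c12coc]
  rw [smul_neg, mul_smul_comm]
  rfl

lemma πM_actM [NeZero p] (g : Gp p) (m : Mc p) :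
    πM p (actM p g m) = πM p m - e₂ (π12 p g) * weightSum E₁ (m.2 : RG p) := by
  change πA p (of ℤ _ (π12 p g) • m.1.1 + (θω p g m.2).1) = _
  rw [map_add, πA_of_smul, πA_θω_fst, ← sub_eq_add_neg]
  rfl

lemma ψM_actM_s3 (m : Mc p) : ψM p (actM p (s3 p) m) = ψM p m + weightSum E₁ (m.2 : RG p) := by
  change weightSum _ (of ℤ _ (s3 p) * (m.2 : RG p)) = _
  refine weightSum_of_mul (fun h => ?_) _
  change (0 + E₁ h) * (1 + E₃ h) = E₁ h * E₃ h + E₁ h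
  ring

lemma weightSum_nOrd_smul [Fact (1 < p)] {H : Subgroup (Gp p)} (hH : H ∈ HH p) (w : Gp p → ZMod p)
    (y : RG p) : weightSum w (nOrd p H • y) = 0 := by
  rw [map_nsmul, nsmul_eq_mul, (ZMod.natCast_eq_zero_iff _ _).mpr (p_dvd_nOrd hH), zero_mul]

lemma ψM_actM_fHof [Fact (1 < p)] {H : Subgroup (Gp p)} (hH : H ∈ HH p) (z : ↥H → Kc p × Kc p)
    (u : Gp p) (h : ↥H) : ψM p (actM p u (fHof p H z h)) = 0 := by
  change weightSum _ (of ℤ _ u * (nOrd p H • (dH p H h : RG p))) = 0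
  rw [mul_smul_comm, weightSum_nOrd_smul hH]

lemma πM_actM_fHof [Fact (1 < p)] (hodd : Odd p) {H : Subgroup (Gp p)} (hH : H ∈ HH p)
    (z : ↥H → Kc p × Kc p) (u : Gp p) (h : ↥H) : πM p (actM p u (fHof p H z h)) = 0 := by
  rw [πM_actM]
  change πA p (-vH p H _) - _ * weightSum E₁ (nOrd p H • (dH p H h : RG p)) = 0
  rw [map_neg, πA_vH hodd, weightSum_nOrd_smul hH, neg_zero, mul_zero, sub_zero]

lemma map_actMFull_fst {A : Type*} [AddCommGroup A] (χ : Mc p →+ A)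
    (F : ∀ H : ↥(HH p), (↥(H.val) → Mc p)) (hF : ∀ H u h, χ (actM p u (F H h)) = 0)
    (g : Gp p) (m : MC p) : χ (actMFull p F g m).1 = χ (actM p g m.1) := by
  rw [actMFull, map_add, χ.map_finsum_eq_zero, add_zero]
  intro H
  rw [map_finsuppSum]
  exact Finset.sum_eq_zero fun c _ => by simp only [map_zsmul, hF, smul_zero]

lemma πM_actMFull [Fact (1 < p)] (hodd : Odd p) (z : ∀ H : ↥(HH p), (↥(H.val) → Kc p × Kc p))
    (g : Gp p) (m : MC p) :
    πM p (actMFull p (fun H => fHof p H.val (z H)) g m).1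
      = πM p m.1 - e₂ (π12 p g) * weightSum E₁ (m.1.2 : RG p) := by
  rw [map_actMFull_fst _ _ (fun H => πM_actM_fHof hodd H.2 (z H)), πM_actM]

lemma weightSum_E₁_eq_zero_of_s3_fixed [Fact (1 < p)]
    (z : ∀ H : ↥(HH p), (↥(H.val) → Kc p × Kc p)) (b : MC p)
    (hb : actMFull p (fun H => fHof p H.val (z H)) (s3 p) b = b) :
    weightSum E₁ (b.1.2 : RG p) = 0 := by
  have h := congrArg (fun m : MC p => ψM p m.1) hb
  rw [map_actMFull_fst _ _ (fun H => ψM_actM_fHof H.2 (z H)), ψM_actM_s3] at h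
  exact add_eq_left.mp h

lemma πM_u12e : πM p (((u12e p, 0, 0), 0) : Mc p) = 1 := by
  change πA p (u12e p) = 1
  rw [← one_smul (R12 p) (u12e p), πA_smul_u12e, map_one, Int.cast_one]

end

theorem statement16_general (p : ℕ) (hp : p.Prime) (hodd : p ≠ 2)
    (zH : ∀ H : ↥(HH p), (↥(H.val) → Kc p × Kc p)) :
    ¬ ∃ a b : MC p,
      (∀ g ∈ G34sub p, actMFull p (fun H => fHof p H.val (zH H)) g a = a) ∧
      (∀ g ∈ G34sub p, actMFull p (fun H => fHof p H.val (zH H)) g b = b) ∧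
      ((((u12e p, 0, 0), 0), 0) : MC p) =
        (actMFull p (fun H => fHof p H.val (zH H)) (s1 p) a - a) +
        (actMFull p (fun H => fHof p H.val (zH H)) (s2 p) b - b) := by
  have := Fact.mk hp.one_lt
  rintro ⟨a, b, -, hb, heq⟩
  have hb₁ := weightSum_E₁_eq_zero_of_s3_fixed zH b (hb (s3 p) (Subgroup.subset_closure (by simp)))
  have h := congrArg (fun m : MC p => πM p m.1) heq
  simp only [Prod.fst_add, Prod.fst_sub, map_add, map_sub, πM_actMFull (hp.odd_of_ne_two hodd),
    πM_u12e, hb₁, show e₂ (π12 p (s1 p)) = 0 from rfl, zero_mul, mul_zero, sub_zero,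
    sub_self, add_zero] at h
  exact one_ne_zero h

theorem statement16 (p : ℕ) [NeZero p] (hp : p.Prime) (hodd : p ≠ 2)
    (zH : ∀ H : ↥(HH p), (↥(H.val) → Kc p × Kc p))
    (hz : ∀ H : ↥(HH p), IsOneCocycle (resAct H.val (actM p)) (fHof p H.val (zH H))) :
    ¬ ∃ a b : MC p,
      (∀ g ∈ G34sub p, actMFull p (fun H => fHof p H.val (zH H)) g a = a) ∧
      (∀ g ∈ G34sub p, actMFull p (fun H => fHof p H.val (zH H)) g b = b) ∧
      ((((u12e p, 0, 0), 0), 0) : MC p) =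
        (actMFull p (fun H => fHof p H.val (zH H)) (s1 p) a - a) +
        (actMFull p (fun H => fHof p H.val (zH H)) (s2 p) b - b) :=
  statement16_general p hp hodd zH

end
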